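/- arXiv:2106.02654 — 5 statements merged into one kernel-verified Lean document; each statement's English description precedes it below -/
import Mathlib

section
/- Let X be a measurable space with probability measure μ, and let p, g : X → Δ_m be measurable. Let φ : Δ_m → ℝ₊^m be proper with Q(u) = u·φ(u) α-strongly concave w.r.t. the L_q norm (as a supergradient inequality with supergradient φ). Define C(h) = E_x[ g(x)·(φ(h(x)) − φ(g(x))) ] for measurable h : X → Δ_m. If h*(x) = λ p(x) + (1−λ) g(x) with λ ∈ [0,1] satisfies C(h*) ≤ ε, and E_x[‖p(x) − g(x)‖_q²] > 0, then λ ≤ sqrt( 2ε / (α · E_x[‖p(x) − g(x)‖_q²]) ). -/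
/-!
Strong concavity of `Q(u) = u·φ(u)` with supergradient `φ`, applied at `u = h*(x)` and `v = g(x)`,
collapses to `g·(φ(h*) − φ(g)) ≥ (α/2)‖g − h*‖_q²` because `Q(u) + (v − u)·φ(u) = v·φ(u)`.
Since `g − h* = λ(g − p)`, integrating gives `(α/2) λ² E‖p − g‖_q² ≤ C(h*) ≤ ε`.
-/

open MeasureTheory Finset

noncomputable def finLpNorm {ι : Type*} [Fintype ι] (q : ℝ) (v : ι → ℝ) : ℝ :=
  (∑ i, |v i| ^ q) ^ (1 / q)

section finLpNorm

variable {ι : Type*} [Fintype ι]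

theorem finLpNorm_smul_of_nonneg {q : ℝ} (hq : q ≠ 0) {c : ℝ} (hc : 0 ≤ c) (v : ι → ℝ) :
    finLpNorm q (c • v) = c * finLpNorm q v := by
  have hsum : ∑ i, |(c • v) i| ^ q = c ^ q * ∑ i, |v i| ^ q := by
    rw [mul_sum]
    refine sum_congr rfl fun i _ => ?_
    rw [Pi.smul_apply, smul_eq_mul, abs_mul, abs_of_nonneg hc, Real.mul_rpow hc (abs_nonneg _)]
  rw [finLpNorm, hsum, Real.mul_rpow (Real.rpow_nonneg hc q)
    (sum_nonneg fun i _ => Real.rpow_nonneg (abs_nonneg _) q),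
    ← Real.rpow_mul hc, mul_one_div_cancel hq, Real.rpow_one, finLpNorm]

theorem finLpNorm_sub_comm (q : ℝ) (v w : ι → ℝ) : finLpNorm q (v - w) = finLpNorm q (w - v) := by
  simp only [finLpNorm, Pi.sub_apply, abs_sub_comm]

theorem finLpNorm_sub_convexCombination {q : ℝ} (hq : q ≠ 0) {t : ℝ} (ht : 0 ≤ t)
    (v w : ι → ℝ) : finLpNorm q (v - (t • w + (1 - t) • v)) = t * finLpNorm q (w - v) := by
  have hdiff : v - (t • w + (1 - t) • v) = t • (v - w) := by
    ext i
    simp only [Pi.sub_apply, Pi.add_apply, Pi.smul_apply, smul_eq_mul]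
    ring
  rw [hdiff, finLpNorm_smul_of_nonneg hq ht, finLpNorm_sub_comm]

end finLpNorm

theorem half_mul_sq_le_sum_mul_sub_of_supergradient {ι : Type*} [Fintype ι]
    {φ : (ι → ℝ) → ι → ℝ} {α D : ℝ} {u v : ι → ℝ}
    (h : ∑ i, v i * φ v i ≤ ∑ i, u i * φ u i + ∑ i, (v i - u i) * φ u i - α / 2 * D ^ 2) :
    α / 2 * D ^ 2 ≤ ∑ i, v i * (φ u i - φ v i) := by
  have hlin : ∑ i, u i * φ u i + ∑ i, (v i - u i) * φ u i = ∑ i, v i * φ u i := by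
    rw [← sum_add_distrib]
    exact sum_congr rfl fun i _ => by ring
  have hsplit : ∑ i, v i * (φ u i - φ v i) = ∑ i, v i * φ u i - ∑ i, v i * φ v i := by
    rw [← sum_sub_distrib]
    exact sum_congr rfl fun i _ => by ring
  linarith

theorem le_sqrt_div_of_half_mul_sq_mul_le {lam α J ε : ℝ} (hα : 0 < α)
    (hJ : 0 < J) (h : α / 2 * lam ^ 2 * J ≤ ε) : lam ≤ Real.sqrt (2 * ε / (α * J)) := by
  apply Real.le_sqrt_of_sq_le
  rw [le_div_iff₀ (by positivity)]
  linarith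

theorem stmt_4_general {X : Type*} [MeasurableSpace X] (μ : Measure X)
    {m : ℕ} (q : ℝ) (hq : 1 ≤ q) (α ε lam : ℝ)
    (hα : 0 < α)
    (φ : (Fin m → ℝ) → (Fin m → ℝ))
    (hstrong : ∀ u ∈ stdSimplex ℝ (Fin m), ∀ v ∈ stdSimplex ℝ (Fin m),
      ∑ i, v i * φ v i ≤ ∑ i, u i * φ u i + ∑ i, (v i - u i) * φ u i
        - α / 2 * ((∑ i, |v i - u i| ^ q) ^ (1 / q)) ^ 2)
    (p g : X → Fin m → ℝ)
    (hp : ∀ x, p x ∈ stdSimplex ℝ (Fin m)) (hg : ∀ x, g x ∈ stdSimplex ℝ (Fin m))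
    (hlam : lam ∈ Set.Icc (0 : ℝ) 1)
    (hstar : X → Fin m → ℝ)
    (hhstar : ∀ x, hstar x = lam • p x + (1 - lam) • g x)
    (hIntC : Integrable (fun x => ∑ i, g x i * (φ (hstar x) i - φ (g x) i)) μ)
    (hIntq : Integrable (fun x => ((∑ i, |p x i - g x i| ^ q) ^ (1 / q)) ^ 2) μ)
    (hC : (∫ x, ∑ i, g x i * (φ (hstar x) i - φ (g x) i) ∂μ) ≤ ε)
    (hpos : 0 < ∫ x, ((∑ i, |p x i - g x i| ^ q) ^ (1 / q)) ^ 2 ∂μ) :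
    lam ≤ Real.sqrt
      (2 * ε / (α * ∫ x, ((∑ i, |p x i - g x i| ^ q) ^ (1 / q)) ^ 2 ∂μ)) := by
  have hq0 : q ≠ 0 := by linarith
  have pointwise : ∀ x, α / 2 * lam ^ 2 * finLpNorm q (p x - g x) ^ 2
      ≤ ∑ i, g x i * (φ (hstar x) i - φ (g x) i) := by
    intro x
    have hmem : hstar x ∈ stdSimplex ℝ (Fin m) := hhstar x ▸
      convex_stdSimplex ℝ (Fin m) (hp x) (hg x) hlam.1 (by linarith [hlam.2]) (by ring)
    have hconc := half_mul_sq_le_sum_mul_sub_of_supergradient (hstrong _ hmem _ (hg x))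
    have hnorm : finLpNorm q (g x - hstar x) = lam * finLpNorm q (p x - g x) := by
      rw [hhstar x]
      exact finLpNorm_sub_convexCombination hq0 hlam.1 _ _
    change α / 2 * finLpNorm q (g x - hstar x) ^ 2 ≤ _ at hconc
    rw [hnorm] at hconc
    linarith
  have hint := integral_mono (hIntq.const_mul (α / 2 * lam ^ 2)) hIntC pointwise
  rw [integral_const_mul] at hint
  exact le_sqrt_div_of_half_mul_sq_mul_le hα hpos (hint.trans hC)

/-- Bound on the mixing coefficient λ: if Q(u) = u·φ(u) is α-strongly concave
w.r.t. the L_q norm (supergradient inequality with supergradient φ), the churn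
C(h) = E_x[g(x)·(φ(h(x)) − φ(g(x)))] of h*(x) = λ p(x) + (1−λ) g(x) is at most ε,
and E_x[‖p(x) − g(x)‖_q²] > 0, then λ ≤ √(2ε / (α E_x[‖p(x) − g(x)‖_q²])). -/
theorem stmt_4 {X : Type*} [MeasurableSpace X] (μ : Measure X)
    [IsProbabilityMeasure μ] {m : ℕ} (q : ℝ) (hq : 1 ≤ q) (α ε lam : ℝ)
    (hα : 0 < α)
    (φ : (Fin m → ℝ) → (Fin m → ℝ))
    (hφpos : ∀ z ∈ stdSimplex ℝ (Fin m), ∀ i, 0 ≤ φ z i)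
    (hstrong : ∀ u ∈ stdSimplex ℝ (Fin m), ∀ v ∈ stdSimplex ℝ (Fin m),
      ∑ i, v i * φ v i ≤ ∑ i, u i * φ u i + ∑ i, (v i - u i) * φ u i
        - α / 2 * ((∑ i, |v i - u i| ^ q) ^ (1 / q)) ^ 2)
    (p g : X → Fin m → ℝ)
    (hp : ∀ x, p x ∈ stdSimplex ℝ (Fin m)) (hg : ∀ x, g x ∈ stdSimplex ℝ (Fin m))
    (hlam : lam ∈ Set.Icc (0 : ℝ) 1)
    (hstar : X → Fin m → ℝ)
    (hhstar : ∀ x, hstar x = lam • p x + (1 - lam) • g x)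
    (hIntC : Integrable (fun x => ∑ i, g x i * (φ (hstar x) i - φ (g x) i)) μ)
    (hIntq : Integrable (fun x => ((∑ i, |p x i - g x i| ^ q) ^ (1 / q)) ^ 2) μ)
    (hC : (∫ x, ∑ i, g x i * (φ (hstar x) i - φ (g x) i) ∂μ) ≤ ε)
    (hpos : 0 < ∫ x, ((∑ i, |p x i - g x i| ^ q) ^ (1 / q)) ^ 2 ∂μ) :
    lam ≤ Real.sqrt
      (2 * ε / (α * ∫ x, ((∑ i, |p x i - g x i| ^ q) ^ (1 / q)) ^ 2 ∂μ)) :=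
  stmt_4_general μ q hq α ε lam hα φ hstrong p g hp hg hlam hstar hhstar hIntC hIntq hC hpos
end

section
/- Let φ : Δ_m → ℝ₊^m be strictly proper, and suppose teacher equals true class-probability function p. For α ∈ [0,1], ε > 0, define the anchor loss L_anc(h) = E_{(x,y)}[ a(x,y)·φ(h(x)) ] where a(x,y) = α p(x) + (1−α) e_y if y = argmax_k p_k(x) (with a fixed tie-breaking rule) and a(x,y) = ε e_y otherwise. Then L_anc(h) = E_x[ p̃(x)·φ(h(x)) ] where, writing j = argmax_k p_k(x): p̃_j(x) = α p_j(x)² + (1−α) p_j(x), and p̃_s(x) = (α p_j(x) + ε) p_s(x) for s ≠ j. Consequently the minimizer over measurable h : X → Δ_m is h*(x) = p̃(x)/Σ_k p̃_k(x). -/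
/-!
Conditioning on `x` turns the anchor loss into `E_x[∑_y p_y(x) a(x,y)·φ(h x)]`: restricted to the
label `y` and projected to `X`, the joint law is the marginal with density `p_y`. The vector
`∑_y p_y a(x,y)` is exactly `p̃(x)`: the label `j` contributes `p_j (α p + (1-α) e_j)` and every
other label `s` contributes `ε p_s e_s`. For the minimizer write `p̃ = (∑ p̃)·u` with `u ∈ Δ_m`; then
`p̃·φ(v) = (∑ p̃)(u·φ(v))` is minimized at `v = u` by strict properness, and the pointwise
inequality integrates.
-/

open MeasureTheory Finset

section Disintegration

variable {X ι : Type*} [MeasurableSpace X] [Fintype ι] [MeasurableSpace ι]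

structure IsConditionalDistribution (D : Measure (X × ι)) (p : X → ι → ℝ) : Prop where
  mem_stdSimplex : ∀ x, p x ∈ stdSimplex ℝ ι
  measurable : ∀ i, Measurable fun x => p x i
  measure_prod_singleton : ∀ (i : ι) (s : Set X), MeasurableSet s →
    (D (s ×ˢ ({i} : Set ι))).toReal = ∫ x in s, p x i ∂(D.map Prod.fst)

namespace IsConditionalDistribution

variable {D : Measure (X × ι)} [IsFiniteMeasure D] {p : X → ι → ℝ}

lemma integrable (hD : IsConditionalDistribution D p) (i : ι) :
    Integrable (fun x => p x i) (D.map Prod.fst) :=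
  .of_bound (hD.measurable i).aestronglyMeasurable 1 <| ae_of_all _ fun x => by
    obtain ⟨h0, h1⟩ := mem_Icc_of_mem_stdSimplex (hD.mem_stdSimplex x) i
    rwa [Real.norm_of_nonneg h0]

lemma restrict_snd_preimage_singleton (hD : IsConditionalDistribution D p) (i : ι) :
    D.restrict (Prod.snd ⁻¹' {i}) =
      ((D.map Prod.fst).withDensity fun x => ENNReal.ofReal (p x i)).map (·, i) := by
  ext t ht
  have hs : MeasurableSet ((·, i) ⁻¹' t : Set X) := measurable_prodMk_right ht
  rw [Measure.restrict_apply ht, Measure.map_apply measurable_prodMk_right ht,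
    withDensity_apply _ hs, ← ofReal_integral_eq_lintegral_ofReal (hD.integrable i).integrableOn
      (ae_of_all _ fun x => (hD.mem_stdSimplex x).1 i), ← hD.measure_prod_singleton i _ hs,
    ENNReal.ofReal_toReal (measure_ne_top _ _)]
  congr 1
  ext ⟨x, y⟩
  simp only [Set.mem_inter_iff, Set.mem_preimage, Set.mem_singleton_iff, Set.mem_prod]
  exact ⟨fun ⟨hxy, hy⟩ => ⟨hy ▸ hxy, hy⟩, fun ⟨hxi, hy⟩ => ⟨hy ▸ hxi, hy⟩⟩

variable [MeasurableSingletonClass ι]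

lemma setIntegral_snd_preimage_singleton (hD : IsConditionalDistribution D p) (f : X × ι → ℝ)
    (i : ι) :
    ∫ z in Prod.snd ⁻¹' {i}, f z ∂D = ∫ x, p x i * f (x, i) ∂(D.map Prod.fst) := by
  rw [hD.restrict_snd_preimage_singleton i, (measurableEmbedding_prod_mk_right i).integral_map,
    integral_withDensity_eq_integral_toReal_smul (hD.measurable i).ennreal_ofReal
      (ae_of_all _ fun _ => ENNReal.ofReal_lt_top)]
  simp only [ENNReal.toReal_ofReal ((hD.mem_stdSimplex _).1 i), smul_eq_mul]

lemma integrable_mul_section (hD : IsConditionalDistribution D p) {f : X × ι → ℝ}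
    (hf : Integrable f D) (i : ι) :
    Integrable (fun x => p x i * f (x, i)) (D.map Prod.fst) := by
  have := hf.restrict (s := Prod.snd ⁻¹' {i})
  rw [hD.restrict_snd_preimage_singleton i,
    (measurableEmbedding_prod_mk_right i).integrable_map_iff, integrable_withDensity_iff_integrable_smul' (hD.measurable i).ennreal_ofReal
      (ae_of_all _ fun _ => ENNReal.ofReal_lt_top)] at this
  simpa only [ENNReal.toReal_ofReal ((hD.mem_stdSimplex _).1 i), smul_eq_mul,
    Function.comp_apply] using this

theorem integral_eq (hD : IsConditionalDistribution D p) {f : X × ι → ℝ} (hf : Integrable f D) :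
    ∫ z, f z ∂D = ∫ x, ∑ i, p x i * f (x, i) ∂(D.map Prod.fst) := by
  have hunion : (⋃ i : ι, Prod.snd ⁻¹' {i} : Set (X × ι)) = Set.univ := by
    ext; simp
  rw [integral_finsetSum _ fun i _ => hD.integrable_mul_section hf i, ← setIntegral_univ,
    ← hunion, integral_iUnion_fintype (fun i => measurable_snd (measurableSet_singleton i))
      (fun i k hik => (Set.disjoint_singleton.2 hik).preimage _) fun _ => hf.integrableOn]
  exact Finset.sum_congr rfl fun i _ => hD.setIntegral_snd_preimage_singleton f i

end IsConditionalDistribution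

end Disintegration

section Anchor

variable {ι : Type*} [Fintype ι] [DecidableEq ι] (α ε : ℝ) (q : ι → ℝ) (j : ι)

def anchorWeight (y : ι) : ι → ℝ :=
  if y = j then fun i => α * q i + (1 - α) * (Pi.single y (1 : ℝ) : ι → ℝ) i
  else fun i => ε * (Pi.single y (1 : ℝ) : ι → ℝ) i

def anchorTarget (i : ι) : ℝ :=
  if i = j then α * q i ^ 2 + (1 - α) * q i else (α * q j + ε) * q i

lemma sum_mul_anchorWeight (i : ι) :
    ∑ y, q y * anchorWeight α ε q j y i = anchorTarget α ε q j i := by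
  have h : ∀ y, q y * anchorWeight α ε q j y i =
      (if y = j then α * q j * q i else 0) +
        if y = i then (if i = j then 1 - α else ε) * q i else 0 := by
    -- label `j` contributes `α q_j q`, label `i` the one-hot part of its own weight
    intro y
    rcases eq_or_ne y j with rfl | hyj <;> rcases eq_or_ne i y with rfl | hiy
    · simp only [anchorWeight, if_pos, Pi.single_eq_same, mul_one]; ring
    · simp only [anchorWeight, if_true, Pi.single_eq_of_ne hiy, hiy.symm, if_false, mul_zero,
        add_zero]
      ring
    · simp only [anchorWeight, hyj, if_false, if_true, Pi.single_eq_same, mul_one, zero_add]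
      ring
    · simp [anchorWeight, hyj, hiy, hiy.symm]
  simp only [h, sum_add_distrib, sum_ite_eq', mem_univ, if_true, anchorTarget]
  split_ifs with hij
  · subst hij; ring
  · ring

lemma sum_mul_sum_anchorWeight_mul (v : ι → ℝ) :
    ∑ y, q y * ∑ i, anchorWeight α ε q j y i * v i = ∑ i, anchorTarget α ε q j i * v i := by
  simp only [← sum_mul_anchorWeight, mul_sum, sum_mul, mul_assoc]
  exact sum_comm

lemma sum_anchorTarget (hq : ∑ i, q i = 1) :
    ∑ i, anchorTarget α ε q j i = q j + ε * (1 - q j) := by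
  have h : ∀ i, anchorTarget α ε q j i =
      (α * q j + ε) * q i + if i = j then (1 - α - ε) * q j else 0 := by
    intro i
    by_cases hi : i = j
    · simp only [anchorTarget, hi, if_true]; ring
    · simp [anchorTarget, hi]
  simp only [h, sum_add_distrib, ← mul_sum, hq, sum_ite_eq', mem_univ, if_true]
  ring

variable {α ε q}

lemma anchorTarget_nonneg (hα : α ∈ Set.Icc (0 : ℝ) 1) (hε : 0 ≤ ε) (hq : q ∈ stdSimplex ℝ ι)
    (i : ι) : 0 ≤ anchorTarget α ε q j i := by
  obtain ⟨hqi0, hqi1⟩ := mem_Icc_of_mem_stdSimplex hq i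
  unfold anchorTarget
  split_ifs
  · exact add_nonneg (mul_nonneg hα.1 (sq_nonneg _)) (mul_nonneg (sub_nonneg.2 hα.2) hqi0)
  · exact mul_nonneg (add_nonneg (mul_nonneg hα.1 (hq.1 j)) hε) hqi0

lemma sum_anchorTarget_pos (hε : 0 < ε) (hq : q ∈ stdSimplex ℝ ι) :
    0 < ∑ i, anchorTarget α ε q j i := by
  obtain ⟨hqj0, hqj1⟩ := mem_Icc_of_mem_stdSimplex hq j
  rw [sum_anchorTarget α ε q j hq.2]
  rcases hqj1.lt_or_eq with hlt | heq
  · exact add_pos_of_nonneg_of_pos hqj0 (mul_pos hε (sub_pos.2 hlt))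
  · simp [heq]

lemma abs_anchorWeight_le (hα : α ∈ Set.Icc (0 : ℝ) 1) (hε : 0 ≤ ε) (hq : q ∈ stdSimplex ℝ ι)
    (y i : ι) : |anchorWeight α ε q j y i| ≤ max 1 ε := by
  have hδ := mem_Icc_of_mem_stdSimplex (single_mem_stdSimplex ℝ y) i
  unfold anchorWeight
  split_ifs
  · have h := convex_Icc (0 : ℝ) 1 (mem_Icc_of_mem_stdSimplex hq i) hδ hα.1 (sub_nonneg.2 hα.2)
      (add_sub_cancel α 1)
    rw [smul_eq_mul, smul_eq_mul] at h
    exact (abs_of_nonneg h.1).trans_le (le_max_of_le_left h.2)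
  · rw [abs_of_nonneg (mul_nonneg hε hδ.1)]
    exact le_max_of_le_right (mul_le_of_le_one_right hε hδ.2)

end Anchor

section ProperScore

variable {ι : Type*} [Fintype ι]

def IsStrictlyProper (φ : (ι → ℝ) → ι → ℝ) : Prop :=
  ∀ u ∈ stdSimplex ℝ ι, ∀ v ∈ stdSimplex ℝ ι, v ≠ u → ∑ i, u i * φ u i < ∑ i, u i * φ v i

lemma inv_sum_smul_mem_stdSimplex {w : ι → ℝ} (hw0 : ∀ i, 0 ≤ w i) (hw : 0 < ∑ i, w i) :
    (∑ i, w i)⁻¹ • w ∈ stdSimplex ℝ ι :=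
  ⟨fun i => mul_nonneg (inv_nonneg.2 hw.le) (hw0 i), by
    simp only [Pi.smul_apply, smul_eq_mul, ← mul_sum, inv_mul_cancel₀ hw.ne']⟩

lemma IsStrictlyProper.sum_mul_le_of_mem_stdSimplex {φ : (ι → ℝ) → ι → ℝ} (hφ : IsStrictlyProper φ)
    {w : ι → ℝ} (hw0 : ∀ i, 0 ≤ w i) (hw : 0 < ∑ i, w i) {v : ι → ℝ} (hv : v ∈ stdSimplex ℝ ι) :
    ∑ i, w i * φ ((∑ k, w k)⁻¹ • w) i ≤ ∑ i, w i * φ v i := by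
  have hu := inv_sum_smul_mem_stdSimplex hw0 hw
  have key : ∑ i, ((∑ k, w k)⁻¹ • w) i * φ ((∑ k, w k)⁻¹ • w) i ≤
      ∑ i, ((∑ k, w k)⁻¹ • w) i * φ v i := by
    rcases eq_or_ne v ((∑ k, w k)⁻¹ • w) with rfl | hvu
    · rfl
    · exact (hφ _ hu v hv hvu).le
  simpa only [Pi.smul_apply, smul_eq_mul, mul_assoc, ← mul_sum,
    mul_le_mul_iff_right₀ (inv_pos.2 hw)] using key

end ProperScore

section AnchorLoss

variable {X ι : Type*} [MeasurableSpace X] [Fintype ι] [DecidableEq ι] [MeasurableSpace ι]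
  [MeasurableSingletonClass ι]

lemma integrable_sum_anchorWeight_mul {D : Measure (X × ι)} [IsFiniteMeasure D] {p : X → ι → ℝ}
    (hp : ∀ x, p x ∈ stdSimplex ℝ ι) (hpmeas : ∀ i, Measurable fun x => p x i) {j : X → ι}
    (hj : Measurable j) {α ε : ℝ} (hα : α ∈ Set.Icc (0 : ℝ) 1) (hε : 0 ≤ ε) {g : X → ι → ℝ}
    (hg : ∀ i, Measurable fun x => g x i) {B : ℝ} (hgB : ∀ x i, |g x i| ≤ B) :
    Integrable (fun z : X × ι => ∑ i, anchorWeight α ε (p z.1) (j z.1) z.2 i * g z.1 i) D := by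
  refine integrable_finsetSum _ fun i _ => ?_
  have hg_int : Integrable (fun z : X × ι => g z.1 i) D :=
    .of_bound ((hg i).comp measurable_fst).aestronglyMeasurable B <|
      ae_of_all _ fun z => (Real.norm_eq_abs _).trans_le (hgB z.1 i)
  refine hg_int.bdd_mul (c := max 1 ε) ?_ <| ae_of_all _ fun z =>
    (Real.norm_eq_abs _).trans_le (abs_anchorWeight_le (j z.1) hα hε (hp z.1) z.2 i)
  refine (measurable_from_prod_countable_left fun y => ?_).aestronglyMeasurable
  simp only [anchorWeight, ite_apply]
  exact Measurable.ite (measurableSet_eq_fun measurable_const hj) (by fun_prop) (by fun_prop)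

end AnchorLoss

theorem stmt_9_general {X : Type*} [MeasurableSpace X] {m : ℕ}
    (D : Measure (X × Fin m)) [IsProbabilityMeasure D]
    (p : X → Fin m → ℝ) (hp : ∀ x, p x ∈ stdSimplex ℝ (Fin m))
    (hpmeas : ∀ i, Measurable fun x => p x i)
    (hcond : ∀ (i : Fin m) (s : Set X), MeasurableSet s →
      (D (s ×ˢ ({i} : Set (Fin m)))).toReal = ∫ x in s, p x i ∂(D.map Prod.fst))
    (φ : (Fin m → ℝ) → (Fin m → ℝ)) (B : ℝ)
    (hφB : ∀ z ∈ stdSimplex ℝ (Fin m), ∀ i, |φ z i| ≤ B)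
    (hproper : ∀ u ∈ stdSimplex ℝ (Fin m), ∀ v ∈ stdSimplex ℝ (Fin m), v ≠ u →
      ∑ i, u i * φ u i < ∑ i, u i * φ v i)
    (α ε : ℝ) (hα : α ∈ Set.Icc (0 : ℝ) 1) (hε : 0 < ε)
    -- j x is the argmax of p x with a fixed (deterministic) tie-breaking rule
    (j : X → Fin m) (hjmeas : Measurable j)
    -- the anchor weights a(x,y)
    (a : X × Fin m → Fin m → ℝ)
    (ha : ∀ z : X × Fin m, a z =
      if z.2 = j z.1
        then fun i => α * p z.1 i + (1 - α) * (Pi.single z.2 (1 : ℝ) : Fin m → ℝ) i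
        else fun i => ε * (Pi.single z.2 (1 : ℝ) : Fin m → ℝ) i)
    -- the reweighted distribution p̃
    (ptil : X → Fin m → ℝ)
    (hptil : ∀ x, ∀ i, ptil x i =
      if i = j x then α * p x i ^ 2 + (1 - α) * p x i
      else (α * p x (j x) + ε) * p x i)
    (hIntStar : Integrable
      (fun x => ∑ i, ptil x i * φ ((∑ k, ptil x k)⁻¹ • ptil x) i) (D.map Prod.fst)) :
    (∀ h : X → Fin m → ℝ, (∀ x, h x ∈ stdSimplex ℝ (Fin m)) →
      (∀ i, Measurable fun x => φ (h x) i) →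
      ∫ z, ∑ i, a z i * φ (h z.1) i ∂D =
        ∫ x, ∑ i, ptil x i * φ (h x) i ∂(D.map Prod.fst)) ∧
    (∀ h : X → Fin m → ℝ, (∀ x, h x ∈ stdSimplex ℝ (Fin m)) →
      (∀ i, Measurable fun x => φ (h x) i) →
      Integrable (fun x => ∑ i, ptil x i * φ (h x) i) (D.map Prod.fst) →
      (∫ x, ∑ i, ptil x i * φ ((∑ k, ptil x k)⁻¹ • ptil x) i ∂(D.map Prod.fst)) ≤
        ∫ x, ∑ i, ptil x i * φ (h x) i ∂(D.map Prod.fst)) := by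
  have hD : IsConditionalDistribution D p := ⟨hp, hpmeas, hcond⟩
  obtain rfl : a = fun z => anchorWeight α ε (p z.1) (j z.1) z.2 := funext ha
  obtain rfl : ptil = fun x => anchorTarget α ε (p x) (j x) := funext fun x => funext (hptil x)
  refine ⟨fun h hh hhm => ?_, fun h hh _ hint => ?_⟩
  · rw [hD.integral_eq (integrable_sum_anchorWeight_mul hp hpmeas hjmeas hα hε.le hhm
      fun x => hφB _ (hh x))]
    simp only [sum_mul_sum_anchorWeight_mul]
  · have hφ : IsStrictlyProper φ := hproper
    exact integral_mono hIntStar hint fun x => hφ.sum_mul_le_of_mem_stdSimplex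
      (anchorTarget_nonneg (j x) hα hε.le (hp x)) (sum_anchorTarget_pos (j x) hε (hp x)) (hh x)

/-- Anchor loss with teacher equal to the true class-probability function p:
with a(x,y) = α p(x) + (1−α) e_y when y = argmax_k p_k(x) (tie-broken by j) and
a(x,y) = ε e_y otherwise, the anchor loss E_{(x,y)}[a(x,y)·φ(h(x))] equals
E_x[p̃(x)·φ(h(x))] where p̃_j = α p_j² + (1−α) p_j at the argmax coordinate j and
p̃_s = (α p_j + ε) p_s otherwise; hence for a strictly proper φ the minimizer is
h*(x) = p̃(x)/Σ_k p̃_k(x). -/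
theorem stmt_9 {X : Type*} [MeasurableSpace X] {m : ℕ}
    (D : Measure (X × Fin m)) [IsProbabilityMeasure D]
    (p : X → Fin m → ℝ) (hp : ∀ x, p x ∈ stdSimplex ℝ (Fin m))
    (hpmeas : ∀ i, Measurable fun x => p x i)
    (hcond : ∀ (i : Fin m) (s : Set X), MeasurableSet s →
      (D (s ×ˢ ({i} : Set (Fin m)))).toReal = ∫ x in s, p x i ∂(D.map Prod.fst))
    (φ : (Fin m → ℝ) → (Fin m → ℝ)) (B : ℝ)
    (hφB : ∀ z ∈ stdSimplex ℝ (Fin m), ∀ i, |φ z i| ≤ B)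
    (hφpos : ∀ z ∈ stdSimplex ℝ (Fin m), ∀ i, 0 ≤ φ z i)
    (hproper : ∀ u ∈ stdSimplex ℝ (Fin m), ∀ v ∈ stdSimplex ℝ (Fin m), v ≠ u →
      ∑ i, u i * φ u i < ∑ i, u i * φ v i)
    (α ε : ℝ) (hα : α ∈ Set.Icc (0 : ℝ) 1) (hε : 0 < ε)
    -- j x is the argmax of p x with a fixed (deterministic) tie-breaking rule
    (j : X → Fin m) (hjmeas : Measurable j) (hj : ∀ x, ∀ k, p x k ≤ p x (j x))
    -- the anchor weights a(x,y)
    (a : X × Fin m → Fin m → ℝ)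
    (ha : ∀ z : X × Fin m, a z =
      if z.2 = j z.1
        then fun i => α * p z.1 i + (1 - α) * (Pi.single z.2 (1 : ℝ) : Fin m → ℝ) i
        else fun i => ε * (Pi.single z.2 (1 : ℝ) : Fin m → ℝ) i)
    -- the reweighted distribution p̃
    (ptil : X → Fin m → ℝ)
    (hptil : ∀ x, ∀ i, ptil x i =
      if i = j x then α * p x i ^ 2 + (1 - α) * p x i
      else (α * p x (j x) + ε) * p x i)
    (hIntStar : Integrable
      (fun x => ∑ i, ptil x i * φ ((∑ k, ptil x k)⁻¹ • ptil x) i) (D.map Prod.fst)) :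
    (∀ h : X → Fin m → ℝ, (∀ x, h x ∈ stdSimplex ℝ (Fin m)) →
      (∀ i, Measurable fun x => φ (h x) i) →
      ∫ z, ∑ i, a z i * φ (h z.1) i ∂D =
        ∫ x, ∑ i, ptil x i * φ (h x) i ∂(D.map Prod.fst)) ∧
    (∀ h : X → Fin m → ℝ, (∀ x, h x ∈ stdSimplex ℝ (Fin m)) →
      (∀ i, Measurable fun x => φ (h x) i) →
      Integrable (fun x => ∑ i, ptil x i * φ (h x) i) (D.map Prod.fst) →
      (∫ x, ∑ i, ptil x i * φ ((∑ k, ptil x k)⁻¹ • ptil x) i ∂(D.map Prod.fst)) ≤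
        ∫ x, ∑ i, ptil x i * φ (h x) i ∂(D.map Prod.fst)) :=
  stmt_9_general D p hp hpmeas hcond φ B hφB hproper α ε hα hε j hjmeas a ha ptil hptil hIntStar
end

section
/- Let H be a convex set, R̂, Ĉ : H → ℝ convex with 0 ≤ R̂(h) < B and |Ĉ(h)| < B for all h, let ε > 0, and suppose there exists g ∈ H with Ĉ(g) = 0. Let λ = ε/(ε + 2B) and let h' minimize λ R̂(h) + (1−λ) Ĉ(h) over H. Then Ĉ(h') ≤ ε/2. -/
/-- Let H be convex, R̂, Ĉ convex on H with 0 ≤ R̂ < B and |Ĉ| < B on H, and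
g ∈ H with Ĉ(g) = 0, ε > 0. If h' minimizes λ R̂ + (1−λ) Ĉ over H for
λ = ε/(ε + 2B), then Ĉ(h') ≤ ε/2. -/
theorem stmt_11 {V : Type*} [AddCommGroup V] [Module ℝ V]
    (H : Set V) (hH : Convex ℝ H) (Rhat Chat : V → ℝ) (B ε : ℝ)
    (hRconv : ConvexOn ℝ H Rhat) (hCconv : ConvexOn ℝ H Chat)
    (hRbd : ∀ h ∈ H, 0 ≤ Rhat h ∧ Rhat h < B)
    (hCbd : ∀ h ∈ H, |Chat h| < B)
    (g : V) (hg : g ∈ H) (hCg : Chat g = 0) (hε : 0 < ε)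
    (lam : ℝ) (hlam : lam = ε / (ε + 2 * B))
    (h' : V) (hh' : h' ∈ H)
    (hmin : ∀ h ∈ H, lam * Rhat h' + (1 - lam) * Chat h' ≤
      lam * Rhat h + (1 - lam) * Chat h) :
    Chat h' ≤ ε / 2 := by
  have hB : 0 < B := lt_of_le_of_lt (hRbd g hg).1 (hRbd g hg).2
  have hden : 0 < ε + 2 * B := by linarith
  have hlam_pos : 0 < lam := by rw [hlam]; positivity
  have h1lam : 1 - lam = 2 * B / (ε + 2 * B) := by
    rw [hlam]; field_simp; ring
  have h1lam_pos : 0 < 1 - lam := by rw [h1lam]; positivity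
  have key := hmin g hg
  rw [hCg] at key
  have hRg := (hRbd g hg).2
  have hRh' := (hRbd h' hh').1
  have h2 : (1 - lam) * Chat h' ≤ lam * B := by nlinarith
  have heq : lam * B = (1 - lam) * (ε / 2) := by
    rw [hlam]; field_simp; ring
  nlinarith [h2, heq, h1lam_pos]
end

section
/- Suppose λ̂ ∈ [ε/(ε+2B), 1], and R, C : H → ℝ satisfy: (i) λ̂ R(ĥ) + max_{λ∈[0,1]} (1−λ)(C(ĥ) − ε) ≤ min_{h∈H} [ λ̂ R(h) + (1−λ̂)(C(h) − ε) ] + Δ for some Δ ≥ 0; and (ii) there exists a feasible h̃ ∈ H with C(h̃) ≤ ε. Then R(ĥ) ≤ R(h̃) + (1 + 2B/ε) Δ. -/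
theorem inv_le_one_add_div_of_div_add_le {a b t : ℝ} (ha : 0 < a) (hb : 0 ≤ b)
    (ht : a / (a + b) ≤ t) : t⁻¹ ≤ 1 + b / a := by
  have hab : 0 < a / (a + b) := div_pos ha (by linarith)
  calc t⁻¹ ≤ (a / (a + b))⁻¹ := inv_anti₀ hab ht
    _ = 1 + b / a := by rw [inv_div, add_div, div_self ha.ne']

/-- If λ̂ ∈ [ε/(ε+2B), 1] and (i) λ̂ R(ĥ) + max_{λ∈[0,1]} (1−λ)(C(ĥ) − ε) is within
Δ of the minimum of the Lagrangian λ̂ R(h) + (1−λ̂)(C(h) − ε) over H, and (ii) some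
h̃ ∈ H is feasible (C(h̃) ≤ ε), then R(ĥ) ≤ R(h̃) + (1 + 2B/ε) Δ. -/
theorem stmt_13 {H : Type*} (R C : H → ℝ) (B ε Δ lamhat : ℝ)
    (hε : 0 < ε) (hB : 0 ≤ B) (hΔ : 0 ≤ Δ)
    (hlam : lamhat ∈ Set.Icc (ε / (ε + 2 * B)) 1)
    (hhat : H)
    (hi : ∀ h : H,
      lamhat * R hhat + max ((1 - 0) * (C hhat - ε)) ((1 - 1) * (C hhat - ε)) ≤
        lamhat * R h + (1 - lamhat) * (C h - ε) + Δ)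
    (htil : H) (hfeas : C htil ≤ ε) :
    R hhat ≤ R htil + (1 + 2 * B / ε) * Δ := by
  obtain ⟨hlam_ge, hlam_le_one⟩ := hlam
  have hlam_pos : 0 < lamhat := (div_pos hε (by linarith)).trans_le hlam_ge
  -- the `λ = 1` term of the max vanishes
  have hmax_nonneg : 0 ≤ max ((1 - 0) * (C hhat - ε)) ((1 - 1) * (C hhat - ε)) :=
    le_max_of_le_right (by norm_num)
  have hslack_nonpos : (1 - lamhat) * (C htil - ε) ≤ 0 :=
    mul_nonpos_of_nonneg_of_nonpos (by linarith) (by linarith)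
  have hgap : lamhat * (R hhat - R htil) ≤ Δ := by linarith [hi htil]
  calc R hhat = R htil + lamhat⁻¹ * (lamhat * (R hhat - R htil)) := by
        field_simp; ring
    _ ≤ R htil + lamhat⁻¹ * Δ := by gcongr
    _ ≤ R htil + (1 + 2 * B / ε) * Δ := by
        gcongr
        exact inv_le_one_add_div_of_div_add_le hε (by positivity) hlam_ge
end

section
/- Let R, C : H → ℝ with a classifier ĥ satisfying C(ĥ) ≤ ε + Δ_C, and suppose: (a) R(ĥ) − R(h̃) ≤ R(ĥ) − R(h*) for the Bayes-optimal feasible classifier h*, where h*(x) = λ* p(x) + (1−λ*) g(x); (b) R(h) = E_x[p(x)·φ(h(x))]; (c) ‖φ(z)‖_∞ ≤ B; (d) each φ_y is Φ-Lipschitz w.r.t. L₁. Then R(ĥ) − R(h̃) ≤ ε + Δ_C + (B + Φλ*) E_x[ ‖p(x) − g(x)‖₁ ], where C(h) = E_x[ g(x)·(φ(h(x)) − φ(g(x))) ]. -/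
/-!
Split `R(ĥ) - R(h*) = (R(ĥ) - R(g)) + (R(g) - R(h*))`. Pointwise, the first bracket equals the
churn integrand plus `∑ (p - g) (φ(ĥ) - φ(g))`, which Hölder (`ℓ¹` against `ℓ^∞`) bounds by
`B ‖p - g‖₁`. In the second, `h* - g = λ* (p - g)`, so the Lipschitz bound on each `φ_y`,
averaged against the probability vector `p`, gives `Φ λ* ‖p - g‖₁`.
-/

open MeasureTheory Finset

section Pointwise

variable {ι : Type*} [Fintype ι]

lemma sum_mul_sub_sum_mul_le {p q a b : ι → ℝ} {B : ℝ} (hab : ∀ i, |a i - b i| ≤ B) :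
    ∑ i, p i * a i - ∑ i, p i * b i ≤ ∑ i, q i * (a i - b i) + B * ∑ i, |p i - q i| := by
  have holder : ∑ i, (p i - q i) * (a i - b i) ≤ B * ∑ i, |p i - q i| := by
    rw [mul_sum]
    refine sum_le_sum fun i _ => ?_
    calc (p i - q i) * (a i - b i) ≤ |p i - q i| * |a i - b i| := by
          rw [← abs_mul]; exact le_abs_self _
      _ ≤ |p i - q i| * B := mul_le_mul_of_nonneg_left (hab i) (abs_nonneg _)
      _ = B * |p i - q i| := mul_comm _ _
  have split : ∑ i, p i * a i - ∑ i, p i * b i =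
      ∑ i, q i * (a i - b i) + ∑ i, (p i - q i) * (a i - b i) := by
    rw [← sum_sub_distrib, ← sum_add_distrib]
    exact sum_congr rfl fun i _ => by ring
  linarith

lemma sum_mul_le_of_mem_stdSimplex {p c : ι → ℝ} {K : ℝ} (hp : p ∈ stdSimplex ℝ ι)
    (hc : ∀ i, c i ≤ K) : ∑ i, p i * c i ≤ K :=
  calc ∑ i, p i * c i ≤ ∑ i, p i * K :=
        sum_le_sum fun i _ => mul_le_mul_of_nonneg_left (hc i) (hp.1 i)
    _ = K := by rw [← sum_mul, hp.2, one_mul]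

lemma sum_abs_sub_convexCombination (p q : ι → ℝ) {t : ℝ} (ht : 0 ≤ t) :
    ∑ i, |q i - (t • p + (1 - t) • q) i| = t * ∑ i, |p i - q i| := by
  rw [mul_sum]
  refine sum_congr rfl fun i _ => ?_
  have hdiff : q i - (t • p + (1 - t) • q) i = t * (q i - p i) := by
    simp only [Pi.add_apply, Pi.smul_apply, smul_eq_mul]; ring
  rw [hdiff, abs_mul, abs_of_nonneg ht, abs_sub_comm]

variable (φ : (ι → ℝ) → ι → ℝ)

lemma risk_sub_risk_le_churn_add {B : ℝ} (hφ : ∀ z ∈ stdSimplex ℝ ι, ∀ i, 0 ≤ φ z i ∧ φ z i ≤ B)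
    {p q u : ι → ℝ} (hu : u ∈ stdSimplex ℝ ι) (hq : q ∈ stdSimplex ℝ ι) :
    ∑ i, p i * φ u i - ∑ i, p i * φ q i ≤
      ∑ i, q i * (φ u i - φ q i) + B * ∑ i, |p i - q i| :=
  sum_mul_sub_sum_mul_le fun i =>
    abs_sub_le_of_nonneg_of_le (hφ u hu i).1 (hφ u hu i).2 (hφ q hq i).1 (hφ q hq i).2

lemma risk_sub_risk_convexCombination_le {Φ t : ℝ}
    (hlip : ∀ y, ∀ u ∈ stdSimplex ℝ ι, ∀ v ∈ stdSimplex ℝ ι,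
      |φ u y - φ v y| ≤ Φ * ∑ i, |u i - v i|)
    {p q : ι → ℝ} (hp : p ∈ stdSimplex ℝ ι) (hq : q ∈ stdSimplex ℝ ι) (ht : t ∈ Set.Icc (0 : ℝ) 1) :
    ∑ i, p i * φ q i - ∑ i, p i * φ (t • p + (1 - t) • q) i ≤ Φ * t * ∑ i, |p i - q i| := by
  have hmix : t • p + (1 - t) • q ∈ stdSimplex ℝ ι :=
    convex_stdSimplex ℝ ι hp hq ht.1 (by linarith [ht.2]) (by ring)
  rw [← sum_sub_distrib]
  refine (sum_le_sum fun i _ => (mul_sub (p i) _ _).symm.le).trans ?_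
  refine sum_mul_le_of_mem_stdSimplex hp fun y => ?_
  calc φ q y - φ (t • p + (1 - t) • q) y ≤ |φ q y - φ (t • p + (1 - t) • q) y| := le_abs_self _
    _ ≤ Φ * ∑ i, |q i - (t • p + (1 - t) • q) i| := hlip y q hq _ hmix
    _ = Φ * t * ∑ i, |p i - q i| := by rw [sum_abs_sub_convexCombination p q ht.1, mul_assoc]

end Pointwise

lemma MeasureTheory.integral_sub_integral_le {X : Type*} [MeasurableSpace X] {μ : Measure X}
    {f g h : X → ℝ} (hf : Integrable f μ) (hg : Integrable g μ) (hh : Integrable h μ)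
    (hle : ∀ x, f x - g x ≤ h x) : ∫ x, f x ∂μ - ∫ x, g x ∂μ ≤ ∫ x, h x ∂μ := by
  rw [← integral_sub hf hg]
  exact integral_mono (hf.sub hg) hh hle

theorem stmt_18_general {X : Type*} [MeasurableSpace X] (μ : Measure X) {m : ℕ}
    (φ : (Fin m → ℝ) → (Fin m → ℝ)) (B Φ ε ΔC lamstar : ℝ)
    (hφbd : ∀ z ∈ stdSimplex ℝ (Fin m), ∀ i, 0 ≤ φ z i ∧ φ z i ≤ B)
    (hlip : ∀ y : Fin m, ∀ u ∈ stdSimplex ℝ (Fin m), ∀ v ∈ stdSimplex ℝ (Fin m),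
      |φ u y - φ v y| ≤ Φ * ∑ i, |u i - v i|)
    (p g hhat htil hst : X → Fin m → ℝ)
    (hp : ∀ x, p x ∈ stdSimplex ℝ (Fin m)) (hg : ∀ x, g x ∈ stdSimplex ℝ (Fin m))
    (hhhat : ∀ x, hhat x ∈ stdSimplex ℝ (Fin m))
    (hlam : lamstar ∈ Set.Icc (0 : ℝ) 1)
    (hhst : ∀ x, hst x = lamstar • p x + (1 - lamstar) • g x)
    -- (a) h* is Bayes-optimal among feasible classifiers: R(h*) ≤ R(h̃)
    (hbayes : (∫ x, ∑ i, p x i * φ (hst x) i ∂μ) ≤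
      ∫ x, ∑ i, p x i * φ (htil x) i ∂μ)
    -- ĥ satisfies the (approximate) churn constraint
    (hchurn : (∫ x, ∑ i, g x i * (φ (hhat x) i - φ (g x) i) ∂μ) ≤ ε + ΔC)
    (hInt1 : Integrable (fun x => ∑ i, p x i * φ (hhat x) i) μ)
    (hInt3 : Integrable (fun x => ∑ i, p x i * φ (hst x) i) μ)
    (hInt4 : Integrable (fun x => ∑ i, p x i * φ (g x) i) μ)
    (hInt5 : Integrable (fun x => ∑ i, g x i * (φ (hhat x) i - φ (g x) i)) μ)
    (hInt6 : Integrable (fun x => ∑ i, |p x i - g x i|) μ) :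
    (∫ x, ∑ i, p x i * φ (hhat x) i ∂μ) - (∫ x, ∑ i, p x i * φ (htil x) i ∂μ) ≤
      ε + ΔC + (B + Φ * lamstar) * ∫ x, ∑ i, |p x i - g x i| ∂μ := by
  have hchurn_step : (∫ x, ∑ i, p x i * φ (hhat x) i ∂μ) - ∫ x, ∑ i, p x i * φ (g x) i ∂μ ≤
      (∫ x, ∑ i, g x i * (φ (hhat x) i - φ (g x) i) ∂μ) +
        B * ∫ x, ∑ i, |p x i - g x i| ∂μ := by
    rw [← integral_const_mul, ← integral_add hInt5 (hInt6.const_mul B)]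
    exact integral_sub_integral_le hInt1 hInt4 (hInt5.add (hInt6.const_mul B))
      fun x => risk_sub_risk_le_churn_add φ hφbd (hhhat x) (hg x)
  have hlip_step : (∫ x, ∑ i, p x i * φ (g x) i ∂μ) - ∫ x, ∑ i, p x i * φ (hst x) i ∂μ ≤
      Φ * lamstar * ∫ x, ∑ i, |p x i - g x i| ∂μ := by
    rw [← integral_const_mul]
    refine integral_sub_integral_le hInt4 hInt3 (hInt6.const_mul _) fun x => ?_
    rw [hhst x]
    exact risk_sub_risk_convexCombination_le φ hlip (hp x) (hg x) hlam
  linarith [add_mul B (Φ * lamstar) (∫ x, ∑ i, |p x i - g x i| ∂μ)]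

/-- Risk–churn relationship: if ĥ has churn C(ĥ) ≤ ε + Δ_C, the Bayes-optimal
feasible classifier is h* = λ* p + (1−λ*) g with R(h*) ≤ R(h̃), φ takes values in
[0,B] on the simplex and each φ_y is Φ-Lipschitz w.r.t. L₁, then
R(ĥ) − R(h̃) ≤ ε + Δ_C + (B + Φ λ*) E_x[‖p − g‖₁], where
R(h) = E_x[p(x)·φ(h(x))] and C(h) = E_x[g(x)·(φ(h(x)) − φ(g(x)))]. -/
theorem stmt_18 {X : Type*} [MeasurableSpace X] (μ : Measure X)
    [IsProbabilityMeasure μ] {m : ℕ}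
    (φ : (Fin m → ℝ) → (Fin m → ℝ)) (B Φ ε ΔC lamstar : ℝ)
    (hφbd : ∀ z ∈ stdSimplex ℝ (Fin m), ∀ i, 0 ≤ φ z i ∧ φ z i ≤ B)
    (hlip : ∀ y : Fin m, ∀ u ∈ stdSimplex ℝ (Fin m), ∀ v ∈ stdSimplex ℝ (Fin m),
      |φ u y - φ v y| ≤ Φ * ∑ i, |u i - v i|)
    (hΦ : 0 ≤ Φ)
    (p g hhat htil hst : X → Fin m → ℝ)
    (hp : ∀ x, p x ∈ stdSimplex ℝ (Fin m)) (hg : ∀ x, g x ∈ stdSimplex ℝ (Fin m))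
    (hhhat : ∀ x, hhat x ∈ stdSimplex ℝ (Fin m))
    (hhtil : ∀ x, htil x ∈ stdSimplex ℝ (Fin m))
    (hlam : lamstar ∈ Set.Icc (0 : ℝ) 1)
    (hhst : ∀ x, hst x = lamstar • p x + (1 - lamstar) • g x)
    -- (a) h* is Bayes-optimal among feasible classifiers: R(h*) ≤ R(h̃)
    (hbayes : (∫ x, ∑ i, p x i * φ (hst x) i ∂μ) ≤
      ∫ x, ∑ i, p x i * φ (htil x) i ∂μ)
    -- ĥ satisfies the (approximate) churn constraint
    (hchurn : (∫ x, ∑ i, g x i * (φ (hhat x) i - φ (g x) i) ∂μ) ≤ ε + ΔC)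
    (hInt1 : Integrable (fun x => ∑ i, p x i * φ (hhat x) i) μ)
    (hInt2 : Integrable (fun x => ∑ i, p x i * φ (htil x) i) μ)
    (hInt3 : Integrable (fun x => ∑ i, p x i * φ (hst x) i) μ)
    (hInt4 : Integrable (fun x => ∑ i, p x i * φ (g x) i) μ)
    (hInt5 : Integrable (fun x => ∑ i, g x i * (φ (hhat x) i - φ (g x) i)) μ)
    (hInt6 : Integrable (fun x => ∑ i, |p x i - g x i|) μ) :
    (∫ x, ∑ i, p x i * φ (hhat x) i ∂μ) - (∫ x, ∑ i, p x i * φ (htil x) i ∂μ) ≤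
      ε + ΔC + (B + Φ * lamstar) * ∫ x, ∑ i, |p x i - g x i| ∂μ :=
  stmt_18_general μ φ B Φ ε ΔC lamstar hφbd hlip p g hhat htil hst hp hg hhhat hlam hhst hbayes
    hchurn hInt1 hInt3 hInt4 hInt5 hInt6
end
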